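/- Let G and H be connected graphs of order at least 2. If the Cartesian product G □ H is well-dominated, then γ(G □ H) = γ(G)·n(H) = γ(H)·n(G). -/

import Mathlib

open SimpleGraph

variable {V : Type*}

/-- Closed neighborhood of a vertex. -/
def closedNbhd (G : SimpleGraph V) (v : V) : Set V := insert v (G.neighborSet v)

/-- Closed neighborhood of a set of vertices. -/
def closedNbhdSet (G : SimpleGraph V) (A : Set V) : Set V := ⋃ a ∈ A, closedNbhd G a

/-- `D` is a dominating set of `G`. -/
def IsDomSet (G : SimpleGraph V) (D : Set V) : Prop :=
  ∀ v, ∃ u ∈ D, v ∈ closedNbhd G u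

/-- `D` is a minimal dominating set of `G`. -/
def IsMinimalDomSet (G : SimpleGraph V) (D : Set V) : Prop :=
  IsDomSet G D ∧ ∀ D' ⊆ D, IsDomSet G D' → D' = D

/-- The domination number `γ`. -/
noncomputable def domNum (G : SimpleGraph V) : ℕ :=
  sInf {n | ∃ D : Set V, IsDomSet G D ∧ D.ncard = n}

/-- The upper domination number `Γ`. -/
noncomputable def upperDomNum (G : SimpleGraph V) : ℕ :=
  sSup {n | ∃ D : Set V, IsMinimalDomSet G D ∧ D.ncard = n}

/-- A graph is well-dominated if `γ = Γ`. -/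
def WellDominated (G : SimpleGraph V) : Prop := domNum G = upperDomNum G

/-- `A` is an independent set of `G`. -/
def IsIndep (G : SimpleGraph V) (A : Set V) : Prop :=
  ∀ u ∈ A, ∀ v ∈ A, ¬ G.Adj u v

/-- `A` is a maximal independent set of `G`. -/
def IsMaxIndep (G : SimpleGraph V) (A : Set V) : Prop :=
  IsIndep G A ∧ ∀ B, IsIndep G B → A ⊆ B → B = A

/-- The independence number `α`. -/
noncomputable def indepNum (G : SimpleGraph V) : ℕ :=
  sSup {n | ∃ A : Set V, IsIndep G A ∧ A.ncard = n}

/-- The strong product of two graphs. -/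
def strongProd {α β : Type*} (G : SimpleGraph α) (H : SimpleGraph β) :
    SimpleGraph (α × β) where
  Adj x y := x ≠ y ∧ (x.1 = y.1 ∨ G.Adj x.1 y.1) ∧ (x.2 = y.2 ∨ H.Adj x.2 y.2)
  symm := by
    constructor
    rintro x y ⟨h1, h2, h3⟩
    refine ⟨h1.symm, ?_, ?_⟩
    · cases h2 with
      | inl h => exact Or.inl h.symm
      | inr h => exact Or.inr h.symm
    · cases h3 with
      | inl h => exact Or.inl h.symm
      | inr h => exact Or.inr h.symm
  loopless := by constructor; rintro x ⟨h1, _⟩; exact h1 rfl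

/-- The direct (tensor) product of two graphs. -/
def tensorProd {α β : Type*} (G : SimpleGraph α) (H : SimpleGraph β) :
    SimpleGraph (α × β) where
  Adj x y := G.Adj x.1 y.1 ∧ H.Adj x.2 y.2
  symm := ⟨fun _ _ h => ⟨h.1.symm, h.2.symm⟩⟩
  loopless := ⟨fun _ h => G.irrefl h.1⟩

/-- The corona `G ⊙ K₁`. -/
def corona {α : Type*} (G : SimpleGraph α) : SimpleGraph (α ⊕ α) :=
  SimpleGraph.fromRel (fun x y =>
    match x, y with
    | Sum.inl u, Sum.inl v => G.Adj u v
    | Sum.inl u, Sum.inr v => u = v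
    | _, _ => False)

/-- The private neighborhood `pn[u,D] = N[u] - N[D - {u}]`. -/
def privateNbhd (G : SimpleGraph V) (D : Set V) (u : V) : Set V :=
  {x | x ∈ closedNbhd G u ∧ ∀ d ∈ D, d ≠ u → x ∉ closedNbhd G d}

/-- A set `D` is open irredundant if every vertex of `D` has an external
private neighbor. -/
def IsOpenIrred (G : SimpleGraph V) (D : Set V) : Prop :=
  ∀ u ∈ D, ∃ x ∈ G.neighborSet u, ∀ d ∈ D, d ≠ u → x ∉ closedNbhd G d

/-!
Take a minimum dominating set `D` of `G` in which every vertex has an external private neighbour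
(Bollobás–Cockayne: among minimum dominating sets, one spanning the most edges works, since a
vertex without external private neighbour could be swapped for one of its neighbours). Then every
vertex `(d, h)` of `D × V(H)` has the private neighbour `(x, h)`, where `x` is an external private
neighbour of `d`, so `D × V(H)` is a minimal dominating set of `G □ H`. Hence
`γ(G □ H) ≤ γ(G) n(H) ≤ Γ(G □ H)`, and well-domination closes the gap; the other equality follows
by symmetry of `□`.
-/

section DominatingSets

open Set

variable {α β : Type*} {G : SimpleGraph α} {D D' : Set α} {u v w x : α}

lemma mem_closedNbhd_iff : x ∈ closedNbhd G u ↔ x = u ∨ G.Adj u x := by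
  simp [closedNbhd]

lemma self_mem_closedNbhd (G : SimpleGraph α) (u : α) : u ∈ closedNbhd G u :=
  mem_insert u _

lemma domNum_le (hD : IsDomSet G D) : domNum G ≤ D.ncard :=
  Nat.sInf_le ⟨D, hD, rfl⟩

lemma exists_isDomSet_ncard_eq_domNum (G : SimpleGraph α) :
    ∃ D, IsDomSet G D ∧ D.ncard = domNum G :=
  Nat.sInf_mem (⟨_, univ, fun v => ⟨v, trivial, self_mem_closedNbhd G v⟩, rfl⟩ :
    {n | ∃ D : Set α, IsDomSet G D ∧ D.ncard = n}.Nonempty)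

lemma IsMinimalDomSet.ncard_le_upperDomNum [Finite α] (hD : IsMinimalDomSet G D) :
    D.ncard ≤ upperDomNum G :=
  le_csSup ⟨Nat.card α, by rintro _ ⟨E, -, rfl⟩; exact ncard_le_card E⟩ ⟨D, hD, rfl⟩

lemma IsDomSet.of_diff_singleton_subset (hD : IsDomSet G D) (hsub : D \ {v} ⊆ D')
    (hv : ∀ x ∈ closedNbhd G v, ∃ d ∈ D', x ∈ closedNbhd G d) : IsDomSet G D' := by
  intro x
  obtain ⟨u, hu, hx⟩ := hD x
  by_cases huv : u = v
  · exact hv x (huv ▸ hx)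
  · exact ⟨u, hsub ⟨hu, huv⟩, hx⟩

lemma exists_mem_diff_of_notMem_privateNbhd (hx : x ∈ closedNbhd G v)
    (hpriv : x ∉ privateNbhd G D v) : ∃ d ∈ D \ {v}, x ∈ closedNbhd G d := by
  simp only [privateNbhd, mem_ofPred_eq, not_and, not_forall, not_not] at hpriv
  obtain ⟨d, hd, hdv, hxd⟩ := hpriv hx
  exact ⟨d, ⟨hd, hdv⟩, hxd⟩

lemma isOpenIrred_iff :
    IsOpenIrred G D ↔ ∀ u ∈ D, ∃ x, G.Adj u x ∧ x ∈ privateNbhd G D u := by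
  simp only [IsOpenIrred, privateNbhd, mem_neighborSet, mem_ofPred_eq, mem_closedNbhd_iff]
  grind

lemma privateNbhd_nonempty_of_ncard_eq_domNum [Finite α] (hD : IsDomSet G D)
    (hcard : D.ncard = domNum G) (hv : v ∈ D) : (privateNbhd G D v).Nonempty := by
  by_contra hempty
  have hdom : IsDomSet G (D \ {v}) := hD.of_diff_singleton_subset subset_rfl fun x hx =>
    exists_mem_diff_of_notMem_privateNbhd hx fun hx' => hempty ⟨x, hx'⟩
  have := domNum_le hdom
  have := ncard_sdiff_singleton_lt_of_mem hv D.toFinite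
  omega

lemma IsDomSet.isMinimalDomSet (hD : IsDomSet G D)
    (hpriv : ∀ u ∈ D, (privateNbhd G D u).Nonempty) : IsMinimalDomSet G D := by
  refine ⟨hD, fun D' hsub hD' => hsub.antisymm fun u hu => ?_⟩
  by_contra huD'
  obtain ⟨x, -, hx⟩ := hpriv u hu
  obtain ⟨d, hd, hxd⟩ := hD' x
  exact hx d (hsub hd) (fun h => huD' (h ▸ hd)) hxd

lemma self_mem_privateNbhd_of_ncard_eq_domNum [Finite α] (hD : IsDomSet G D)
    (hcard : D.ncard = domNum G) (hv : v ∈ D)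
    (hext : ∀ x, G.Adj v x → x ∉ privateNbhd G D v) : v ∈ privateNbhd G D v := by
  obtain ⟨p, hp⟩ := privateNbhd_nonempty_of_ncard_eq_domNum hD hcard hv
  rcases mem_closedNbhd_iff.1 hp.1 with rfl | hvp
  · exact hp
  · exact absurd hp (hext p hvp)

lemma notMem_of_self_mem_privateNbhd (hvv : v ∈ privateNbhd G D v) (hw : G.Adj v w) :
    w ∉ D := fun hwD =>
  hvv.2 w hwD (G.ne_of_adj hw).symm (mem_closedNbhd_iff.2 (Or.inr hw.symm))

lemma IsDomSet.insert_diff_singleton (hD : IsDomSet G D) (hw : G.Adj v w)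
    (hext : ∀ x, G.Adj v x → x ∉ privateNbhd G D v) : IsDomSet G (insert w (D \ {v})) := by
  refine hD.of_diff_singleton_subset (subset_insert _ _) fun x hx => ?_
  rcases mem_closedNbhd_iff.1 hx with rfl | hvx
  · exact ⟨w, mem_insert _ _, mem_closedNbhd_iff.2 (Or.inr hw.symm)⟩
  · obtain ⟨d, hd, hxd⟩ := exists_mem_diff_of_notMem_privateNbhd hx (hext x hvx)
    exact ⟨d, mem_insert_of_mem _ hd, hxd⟩

def adjPairs (G : SimpleGraph α) (D : Set α) : Set (α × α) :=
  {p | p.1 ∈ D ∧ p.2 ∈ D ∧ G.Adj p.1 p.2}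

lemma adjPairs_ssubset_insert_diff_singleton (hvv : v ∈ privateNbhd G D v) (hw : G.Adj v w)
    (hext : ∀ x, G.Adj v x → x ∉ privateNbhd G D v) :
    adjPairs G D ⊂ adjPairs G (insert w (D \ {v})) := by
  have hne : ∀ a ∈ D, ∀ b ∈ D, G.Adj a b → a ≠ v := by
    rintro a - b hb hab rfl
    exact hvv.2 b hb (G.ne_of_adj hab).symm (mem_closedNbhd_iff.2 (Or.inr hab.symm))
  have hwD := notMem_of_self_mem_privateNbhd hvv hw
  obtain ⟨d, hd, hwd⟩ :=
    exists_mem_diff_of_notMem_privateNbhd (mem_closedNbhd_iff.2 (Or.inr hw)) (hext w hw)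
  have hdw : G.Adj d w := (mem_closedNbhd_iff.1 hwd).resolve_left fun h => hwD (h ▸ hd.1)
  refine ssubset_iff_of_subset (fun ⟨a, b⟩ ⟨ha, hb, hab⟩ => ?_) |>.2
    ⟨(w, d), ⟨mem_insert _ _, mem_insert_of_mem _ hd, hdw.symm⟩, fun h => hwD h.1⟩
  exact ⟨mem_insert_of_mem _ ⟨ha, hne a ha b hb hab⟩,
    mem_insert_of_mem _ ⟨hb, hne b hb a ha hab.symm⟩, hab⟩

theorem exists_isOpenIrred_ncard_eq_domNum [Finite α] (hG : ∀ v, ∃ w, G.Adj v w) :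
    ∃ D, IsDomSet G D ∧ IsOpenIrred G D ∧ D.ncard = domNum G := by
  obtain ⟨D, ⟨hD, hcard⟩, hmax⟩ :=
    (toFinite {D : Set α | IsDomSet G D ∧ D.ncard = domNum G}).exists_maximalFor
      (fun D => (adjPairs G D).ncard) _ (exists_isDomSet_ncard_eq_domNum G)
  refine ⟨D, hD, isOpenIrred_iff.2 fun v hv => ?_, hcard⟩
  by_contra! hext
  obtain ⟨w, hw⟩ := hG v
  have hvv := self_mem_privateNbhd_of_ncard_eq_domNum hD hcard hv hext
  have hlt := ncard_lt_ncard (adjPairs_ssubset_insert_diff_singleton hvv hw hext) (toFinite _)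
  have hcard' : (insert w (D \ {v})).ncard = domNum G := by
    rw [ncard_exchange (notMem_of_self_mem_privateNbhd hvv hw) hv, hcard]
  exact hlt.not_ge (hmax ⟨hD.insert_diff_singleton hw hext, hcard'⟩ hlt.le)

lemma IsDomSet.isMinimalDomSet_prod_univ {H : SimpleGraph β} (hD : IsDomSet G D)
    (hirr : IsOpenIrred G D) : IsMinimalDomSet (G □ H) (D ×ˢ univ) := by
  refine IsDomSet.isMinimalDomSet (fun ⟨g, h⟩ => ?_) ?_
  · obtain ⟨u, hu, hg⟩ := hD g
    refine ⟨(u, h), ⟨hu, trivial⟩, ?_⟩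
    rcases mem_closedNbhd_iff.1 hg with rfl | hadj
    · exact self_mem_closedNbhd _ _
    · exact mem_closedNbhd_iff.2 (Or.inr (boxProd_adj.2 (Or.inl ⟨hadj, rfl⟩)))
  · rintro ⟨d, h⟩ ⟨hd, -⟩
    obtain ⟨x, hdx, hx⟩ := isOpenIrred_iff.1 hirr d hd
    have hxD : x ∉ D := fun hxD =>
      hx.2 x hxD (G.ne_of_adj hdx).symm (self_mem_closedNbhd G x)
    refine ⟨(x, h), mem_closedNbhd_iff.2 (Or.inr (boxProd_adj.2 (Or.inl ⟨hdx, rfl⟩))), ?_⟩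
    rintro ⟨u, k⟩ ⟨hu, -⟩ hne hmem
    rcases mem_closedNbhd_iff.1 hmem with heq | hadj
    · exact hxD ((Prod.mk.inj heq).1 ▸ hu)
    · rcases boxProd_adj.1 hadj with ⟨hux, hkh⟩ | ⟨-, hux⟩
      · refine hx.2 u hu (fun hud => hne ?_) (mem_closedNbhd_iff.2 (Or.inr hux))
        exact Prod.ext hud hkh
      · obtain rfl : u = x := hux
        exact hxD hu

section Iso

variable {G' : SimpleGraph β}

lemma mem_closedNbhd_iso_iff (e : G ≃g G') :
    e x ∈ closedNbhd G' (e u) ↔ x ∈ closedNbhd G u := by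
  simp [mem_closedNbhd_iff, Iso.map_adj_iff]

lemma IsDomSet.image_iso (hD : IsDomSet G D) (e : G ≃g G') : IsDomSet G' (e '' D) := by
  intro y
  obtain ⟨u, hu, hx⟩ := hD (e.symm y)
  exact ⟨e u, mem_image_of_mem e hu, by simpa using (mem_closedNbhd_iso_iff e).2 hx⟩

lemma IsMinimalDomSet.image_iso (hD : IsMinimalDomSet G D) (e : G ≃g G') :
    IsMinimalDomSet G' (e '' D) := by
  refine ⟨hD.1.image_iso e, fun E hE hEdom => ?_⟩
  have hsub : e.symm '' E ⊆ D := (Equiv.symm_image_subset e.toEquiv D E).2 hE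
  rw [← hD.2 _ hsub (hEdom.image_iso e.symm), image_image]
  simp

lemma domNum_le_of_iso (e : G ≃g G') : domNum G ≤ domNum G' := by
  obtain ⟨D, hD, hcard⟩ := exists_isDomSet_ncard_eq_domNum G'
  calc domNum G ≤ (e.symm '' D).ncard := domNum_le (hD.image_iso e.symm)
    _ = domNum G' := by rw [ncard_image_of_injective _ e.symm.injective, hcard]

lemma domNum_congr (e : G ≃g G') : domNum G = domNum G' :=
  (domNum_le_of_iso e).antisymm (domNum_le_of_iso e.symm)

lemma upperDomNum_le_of_iso [Finite β] (e : G ≃g G') : upperDomNum G ≤ upperDomNum G' := by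
  refine csSup_le' ?_
  rintro _ ⟨D, hD, rfl⟩
  rw [← ncard_image_of_injective D e.injective]
  exact (hD.image_iso e).ncard_le_upperDomNum

lemma upperDomNum_congr [Finite α] [Finite β] (e : G ≃g G') : upperDomNum G = upperDomNum G' :=
  (upperDomNum_le_of_iso e).antisymm (upperDomNum_le_of_iso e.symm)

lemma WellDominated.of_iso [Finite α] [Finite β] (h : WellDominated G) (e : G ≃g G') :
    WellDominated G' := by
  rwa [WellDominated, ← domNum_congr e, ← upperDomNum_congr e]

end Iso

theorem domNum_boxProd_eq_of_wellDominated [Finite α] [Finite β] {H : SimpleGraph β}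
    (hG : ∀ v, ∃ w, G.Adj v w) (h : WellDominated (G □ H)) :
    domNum (G □ H) = domNum G * Nat.card β := by
  obtain ⟨D, hD, hirr, hcard⟩ := exists_isOpenIrred_ncard_eq_domNum hG
  have hmin := hD.isMinimalDomSet_prod_univ (H := H) hirr
  have hprod : (D ×ˢ (univ : Set β)).ncard = domNum G * Nat.card β := by
    rw [ncard_prod, ncard_univ, hcard]
  refine le_antisymm (hprod ▸ domNum_le hmin.1) ?_
  calc domNum G * Nat.card β = (D ×ˢ (univ : Set β)).ncard := hprod.symm
    _ ≤ upperDomNum (G □ H) := hmin.ncard_le_upperDomNum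
    _ = domNum (G □ H) := h.symm

end DominatingSets

/-- If `G □ H` is well-dominated (both factors nontrivial and connected), then
`γ(G □ H) = γ(G)n(H) = γ(H)n(G)`. -/
theorem stmt_13 {α β : Type*} [Fintype α] [Fintype β]
    (G : SimpleGraph α) (H : SimpleGraph β)
    (hG : G.Connected) (hH : H.Connected)
    (hα : 2 ≤ Fintype.card α) (hβ : 2 ≤ Fintype.card β)
    (h : WellDominated (G □ H)) :
    domNum (G □ H) = domNum G * Fintype.card β ∧
    domNum (G □ H) = domNum H * Fintype.card α := by
  have : Nontrivial α := Fintype.one_lt_card_iff_nontrivial.1 hα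
  have : Nontrivial β := Fintype.one_lt_card_iff_nontrivial.1 hβ
  rw [← Nat.card_eq_fintype_card, ← Nat.card_eq_fintype_card]
  refine ⟨domNum_boxProd_eq_of_wellDominated hG.preconnected.exists_adj_of_nontrivial h, ?_⟩
  rw [domNum_congr (boxProdComm G H)]
  exact domNum_boxProd_eq_of_wellDominated hH.preconnected.exists_adj_of_nontrivial
    (h.of_iso (boxProdComm G H))
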